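/- arXiv:2009.06312 — 8 statements merged into one kernel-verified Lean document; each statement's English description precedes it below -/
import Mathlib

section
/- Let n, m be positive integers, H an n×m real matrix, y ∈ ℝⁿ, α ≥ 0 and M > 0. Suppose J ⊆ {1,…,m} is a forbidden support for the ℓ₁ problem, i.e., every vector x ∈ ℝᵐ whose support is contained in J satisfies ‖y − Hx‖₁ > α. Then every feasible solution (x, w, b) of the formulation MIP₀/₁ — that is, x ∈ ℝᵐ, w ∈ ℝⁿ, b ∈ {0,1}ᵐ with −M·b_j ≤ x_j ≤ M·b_j for all j, −w_i ≤ y_i − ∑_j h_{ij} x_j ≤ w_i for all i, and ∑_i w_i ≤ α — satisfies the forbidden support inequality ∑_{j ∉ J} b_j ≥ 1. -/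
open scoped Classical
open Finset

noncomputable section SparseApprox

/-- ℓ₁ data misfit ‖y - Hx‖₁ = ∑ᵢ |yᵢ - (Hx)ᵢ|. -/
def l1Misfit {n m : ℕ} (H : Matrix (Fin n) (Fin m) ℝ) (y : Fin n → ℝ)
    (x : Fin m → ℝ) : ℝ :=
  ∑ i, |y i - ∑ j, H i j * x j|

/-- ℓ∞ data misfit ‖y - Hx‖∞ = maxᵢ |yᵢ - (Hx)ᵢ|. -/
def linfMisfit {n m : ℕ} (H : Matrix (Fin n) (Fin m) ℝ) (y : Fin n → ℝ)
    (x : Fin m → ℝ) : ℝ :=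
  ⨆ i, |y i - ∑ j, H i j * x j|

/-- `J` is a forbidden support for the ℓ₁ problem: every `x` with support
contained in `J` has ℓ₁ misfit exceeding `α`. -/
def ForbiddenL1 {n m : ℕ} (H : Matrix (Fin n) (Fin m) ℝ) (y : Fin n → ℝ)
    (α : ℝ) (J : Finset (Fin m)) : Prop :=
  ∀ x : Fin m → ℝ, (∀ j ∉ J, x j = 0) → α < l1Misfit H y x

/-- `J` is a forbidden support for the ℓ∞ problem. -/
def ForbiddenLinf {n m : ℕ} (H : Matrix (Fin n) (Fin m) ℝ) (y : Fin n → ℝ)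
    (α : ℝ) (J : Finset (Fin m)) : Prop :=
  ∀ x : Fin m → ℝ, (∀ j ∉ J, x j = 0) → α < linfMisfit H y x

/-- The support of a vector `x`, as a finite set of indices. -/
def suppSet {m : ℕ} (x : Fin m → ℝ) : Finset (Fin m) :=
  Finset.univ.filter fun j => x j ≠ 0

/-- validity of the forbidden support inequality for MIP₀/₁. -/
theorem forbidden_support_inequality_l1 {n m : ℕ} (hn : 0 < n) (hm : 0 < m)
    (H : Matrix (Fin n) (Fin m) ℝ) (y : Fin n → ℝ) (α M : ℝ)
    (hα : 0 ≤ α) (hM : 0 < M)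
    (J : Finset (Fin m)) (hJ : ForbiddenL1 H y α J)
    (x : Fin m → ℝ) (w : Fin n → ℝ) (b : Fin m → ℝ)
    (hb : ∀ j, b j = 0 ∨ b j = 1)
    (hxb : ∀ j, -(M * b j) ≤ x j ∧ x j ≤ M * b j)
    (hw : ∀ i, -(w i) ≤ y i - ∑ j, H i j * x j ∧ y i - ∑ j, H i j * x j ≤ w i)
    (hws : ∑ i, w i ≤ α) :
    1 ≤ ∑ j ∈ Jᶜ, b j := by
  by_contra h
  push_neg at h
  -- all b j = 0 for j ∉ J
  have hb0 : ∀ j ∉ J, b j = 0 := by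
    intro j hj
    by_contra hbj
    rcases hb j with h0 | h1
    · exact hbj h0
    · have : (1:ℝ) ≤ ∑ k ∈ Jᶜ, b k := by
        have := Finset.single_le_sum (f := b)
          (fun k _ => (hb k).elim (fun e => e.ge) (fun e => e ▸ zero_le_one))
          (Finset.mem_compl.mpr hj)
        linarith [h1 ▸ this]
      linarith
  have hx0 : ∀ j ∉ J, x j = 0 := by
    intro j hj
    have h0 := hb0 j hj
    have := hxb j
    rw [h0, mul_zero] at this
    linarith [this.1, this.2]
  have hmis : l1Misfit H y x ≤ ∑ i, w i := by
    apply Finset.sum_le_sum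
    intro i _
    exact abs_le.mpr ⟨by linarith [(hw i).1], (hw i).2⟩
  have := hJ x hx0
  unfold l1Misfit at *
  linarith
end SparseApprox
end

section
/- Let n, m be positive integers, H an n×m real matrix, y ∈ ℝⁿ, α ≥ 0 and M > 0. Suppose J ⊆ {1,…,m} is a forbidden support for the ℓ∞ problem, i.e., every vector x ∈ ℝᵐ whose support is contained in J satisfies ‖y − Hx‖∞ > α. Then every feasible solution (x, w, b) of the formulation MIP₀/∞ — that is, x ∈ ℝᵐ, w ∈ ℝ, b ∈ {0,1}ᵐ with −M·b_j ≤ x_j ≤ M·b_j for all j, −w ≤ y_i − ∑_j h_{ij} x_j ≤ w for all i, and w ≤ α — satisfies the forbidden support inequality ∑_{j ∉ J} b_j ≥ 1. -/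
open scoped Classical
open Finset

noncomputable section SparseApprox

/-- validity of the forbidden support inequality for MIP₀/∞. -/
theorem forbidden_support_inequality_linf {n m : ℕ} (hn : 0 < n) (hm : 0 < m)
    (H : Matrix (Fin n) (Fin m) ℝ) (y : Fin n → ℝ) (α M : ℝ)
    (hα : 0 ≤ α) (hM : 0 < M)
    (J : Finset (Fin m)) (hJ : ForbiddenLinf H y α J)
    (x : Fin m → ℝ) (w : ℝ) (b : Fin m → ℝ)
    (hb : ∀ j, b j = 0 ∨ b j = 1)
    (hxb : ∀ j, -(M * b j) ≤ x j ∧ x j ≤ M * b j)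
    (hw : ∀ i, -w ≤ y i - ∑ j, H i j * x j ∧ y i - ∑ j, H i j * x j ≤ w)
    (hwα : w ≤ α) :
    1 ≤ ∑ j ∈ Jᶜ, b j := by
  by_contra hlt
  push_neg at hlt
  have hb0 : ∀ j ∉ J, b j = 0 := by
    intro j hj
    rcases hb j with h0 | h1
    · exact h0
    · exfalso
      have hle : (1:ℝ) ≤ ∑ j ∈ Jᶜ, b j := by
        have := Finset.single_le_sum (f := b)
          (fun k _ => (hb k).elim (fun h => h.ge.trans (by norm_num)) (fun h => by simp [h]))
          (Finset.mem_compl.mpr hj)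
        simpa [h1] using this
      linarith
  have hx0 : ∀ j ∉ J, x j = 0 := by
    intro j hj
    have h0 := hb0 j hj
    have h1 := (hxb j).1
    have h2 := (hxb j).2
    rw [h0] at h1 h2
    simp at h1 h2
    linarith
  have hgt := hJ x hx0
  have : linfMisfit H y x ≤ α := by
    have : Nonempty (Fin n) := ⟨⟨0, hn⟩⟩
    refine ciSup_le fun i => ?_
    have := hw i
    have : |y i - ∑ j, H i j * x j| ≤ w := abs_le.mpr ⟨this.1, this.2⟩
    linarith
  linarith
end SparseApprox
end

section
/- Let H be an n×m real matrix, y ∈ ℝⁿ and α ≥ 0. For a binary vector b ∈ {0,1}ᵐ, the following are equivalent: (i) for every forbidden support J ⊆ {1,…,m} for the ℓ₁ problem, b satisfies the forbidden support inequality ∑_{j ∉ J} b_j ≥ 1; (ii) there exists x ∈ ℝᵐ with support contained in supp(b) := {j : b_j = 1} such that ‖y − Hx‖₁ ≤ α. In other words, the set of supports of feasible solutions of the ℓ₁ sparse approximation problem is exactly described by the forbidden support inequalities. -/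
open scoped Classical
open Finset

noncomputable section SparseApprox

/-- the feasible supports of the ℓ₁ problem are exactly described
by the forbidden support inequalities. -/
theorem supports_described_by_forbidden_inequalities_l1 {n m : ℕ}
    (H : Matrix (Fin n) (Fin m) ℝ) (y : Fin n → ℝ) (α : ℝ) (hα : 0 ≤ α)
    (b : Fin m → ℝ) (hb : ∀ j, b j = 0 ∨ b j = 1) :
    (∀ J : Finset (Fin m), ForbiddenL1 H y α J → 1 ≤ ∑ j ∈ Jᶜ, b j) ↔
      ∃ x : Fin m → ℝ, (∀ j, x j ≠ 0 → b j = 1) ∧ l1Misfit H y x ≤ α := by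
  constructor
  · intro h
    by_contra hnx
    push_neg at hnx
    have hforb : ForbiddenL1 H y α (Finset.univ.filter fun j => b j = 1) := by
      intro x hx
      exact hnx x (fun j hj => by
        by_contra hb1
        exact hj (hx j (by simp [hb1])))
    have := h _ hforb
    have hzero : ∑ j ∈ (Finset.univ.filter fun j => b j = 1)ᶜ, b j = 0 := by
      apply Finset.sum_eq_zero
      intro j hj
      simp only [Finset.mem_compl, Finset.mem_filter, Finset.mem_univ, true_and] at hj
      rcases hb j with h0 | h1
      · exact h0
      · exact absurd h1 hj
    rw [hzero] at this
    linarith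
  · rintro ⟨x, hsupp, hmis⟩
    intro J hJ
    have hns : ¬ (∀ j ∉ J, x j = 0) := fun hc => absurd hmis (not_le.mpr (hJ x hc))
    push_neg at hns
    obtain ⟨j, hjJ, hjx⟩ := hns
    have hbj := hsupp j hjx
    calc (1:ℝ) = b j := hbj.symm
    _ ≤ ∑ j ∈ Jᶜ, b j := by
        apply Finset.single_le_sum (f := b) (fun i _ => by rcases hb i with h|h <;> simp [h])
        simpa using hjJ
end SparseApprox
end

section
/- Let H be an n×m real matrix, y ∈ ℝⁿ and α ≥ 0. For a binary vector b ∈ {0,1}ᵐ, the following are equivalent: (i) for every forbidden support J ⊆ {1,…,m} for the ℓ∞ problem, b satisfies the forbidden support inequality ∑_{j ∉ J} b_j ≥ 1; (ii) there exists x ∈ ℝᵐ with support contained in supp(b) := {j : b_j = 1} such that ‖y − Hx‖∞ ≤ α. -/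
open scoped Classical
open Finset

noncomputable section SparseApprox

/-- the feasible supports of the ℓ∞ problem are exactly described
by the forbidden support inequalities. -/
theorem supports_described_by_forbidden_inequalities_linf {n m : ℕ}
    (H : Matrix (Fin n) (Fin m) ℝ) (y : Fin n → ℝ) (α : ℝ) (hα : 0 ≤ α)
    (b : Fin m → ℝ) (hb : ∀ j, b j = 0 ∨ b j = 1) :
    (∀ J : Finset (Fin m), ForbiddenLinf H y α J → 1 ≤ ∑ j ∈ Jᶜ, b j) ↔
      ∃ x : Fin m → ℝ, (∀ j, x j ≠ 0 → b j = 1) ∧ linfMisfit H y x ≤ α := by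
  constructor
  · intro h
    by_contra hx
    push_neg at hx
    have hforb : ForbiddenLinf H y α (Finset.univ.filter fun j => b j = 1) := by
      intro x hxsup
      by_contra hle
      push_neg at hle
      exact absurd hle (not_le.mpr (hx x (fun j hj => by
        by_contra hbj
        exact hj (hxsup j (by simp [hbj])))))
    have := h _ hforb
    have hz : ∑ j ∈ (Finset.univ.filter fun j => b j = 1)ᶜ, b j = 0 := by
      apply Finset.sum_eq_zero
      intro j hj
      simp only [Finset.mem_compl, Finset.mem_filter, Finset.mem_univ, true_and] at hj
      rcases hb j with h0 | h1
      · exact h0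
      · exact absurd h1 hj
    linarith
  · rintro ⟨x, hsup, hmis⟩ J hJ
    have hnx : ¬ (∀ j ∉ J, x j = 0) := fun hc => absurd hmis (not_le.mpr (hJ x hc))
    push_neg at hnx
    obtain ⟨j, hjJ, hjx⟩ := hnx
    have hbj : b j = 1 := hsup j hjx
    calc (1 : ℝ) = b j := hbj.symm
      _ ≤ ∑ j ∈ Jᶜ, b j := Finset.single_le_sum (fun i _ => by rcases hb i with h|h <;> simp [h])
          (Finset.mem_compl.mpr hjJ)
end SparseApprox
end

section
/- Let H be an n×m real matrix, y ∈ ℝⁿ and α ≥ 0, and let 𝒥 be a nonempty family of forbidden supports for the ℓ₁ problem. Define J^none := {1,…,m} \ ⋃_{J ∈ 𝒥} J and J^some := {1,…,m} \ (J^none ∪ ⋂_{J ∈ 𝒥} J). Then every x ∈ ℝᵐ with ‖y − Hx‖₁ ≤ α satisfies the forbidden support family inequality 2·#( supp(x) ∩ J^none ) + #( supp(x) ∩ J^some ) ≥ 2, where supp(x) = {j : x_j ≠ 0}. -/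
open scoped Classical
open Finset

noncomputable section SparseApprox

/-- the forbidden support family inequality for the ℓ₁ problem. -/
theorem forbidden_support_family_inequality_l1 {n m : ℕ}
    (H : Matrix (Fin n) (Fin m) ℝ) (y : Fin n → ℝ) (α : ℝ) (hα : 0 ≤ α)
    (𝒥 : Finset (Finset (Fin m))) (h𝒥ne : 𝒥.Nonempty)
    (h𝒥 : ∀ J ∈ 𝒥, ForbiddenL1 H y α J)
    (Jnone Jsome : Finset (Fin m))
    (hnone : Jnone = (Finset.univ.filter fun j => ∃ J ∈ 𝒥, j ∈ J)ᶜ)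
    (hsome : Jsome = (Jnone ∪ Finset.univ.filter fun j => ∀ J ∈ 𝒥, j ∈ J)ᶜ)
    (x : Fin m → ℝ) (hx : l1Misfit H y x ≤ α) :
    2 ≤ 2 * (suppSet x ∩ Jnone).card + (suppSet x ∩ Jsome).card := by
  by_contra hcon
  push_neg at hcon
  -- from hcon: the Jnone intersection is empty and the Jsome one has card ≤ 1
  have hnone0 : (suppSet x ∩ Jnone).card = 0 := by omega
  have hsome1 : (suppSet x ∩ Jsome).card ≤ 1 := by omega
  have hnoneE : suppSet x ∩ Jnone = ∅ := Finset.card_eq_zero.mp hnone0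
  have hmemJnone : ∀ k, k ∈ Jnone ↔ ¬ ∃ J ∈ 𝒥, k ∈ J := by
    intro k
    simp [hnone, Finset.mem_compl]
  have hmemJsome : ∀ k, k ∈ Jsome ↔ (k ∉ Jnone ∧ ¬ ∀ J ∈ 𝒥, k ∈ J) := by
    intro k
    simp [hsome, Finset.mem_compl, Finset.mem_union]
  -- every element of supp x lies in Jsome or in the intersection of all J
  have hkey : ∀ k ∈ suppSet x, k ∉ Jsome → ∀ J ∈ 𝒥, k ∈ J := by
    intro k hk hks J hJ
    have hkn : k ∉ Jnone := by
      intro hkn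
      have : k ∈ suppSet x ∩ Jnone := Finset.mem_inter.mpr ⟨hk, hkn⟩
      simp [hnoneE] at this
    have := (hmemJsome k).not.mp hks
    push_neg at this
    exact this hkn J hJ
  -- find a single J₀ ∈ 𝒥 containing all of supp x
  have hJ0 : ∃ J₀ ∈ 𝒥, ∀ k ∈ suppSet x, k ∈ J₀ := by
    rcases Finset.eq_empty_or_nonempty (suppSet x ∩ Jsome) with he | hne
    · obtain ⟨J₀, hJ₀⟩ := h𝒥ne
      refine ⟨J₀, hJ₀, fun k hk => ?_⟩
      have hks : k ∉ Jsome := by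
        intro hks
        have : k ∈ suppSet x ∩ Jsome := Finset.mem_inter.mpr ⟨hk, hks⟩
        simp [he] at this
      exact hkey k hk hks J₀ hJ₀
    · obtain ⟨j, hj⟩ := hne
      have hsing : suppSet x ∩ Jsome = {j} := by
        apply Finset.eq_singleton_iff_unique_mem.mpr
        refine ⟨hj, fun b hb => ?_⟩
        by_contra hne'
        have : 2 ≤ (suppSet x ∩ Jsome).card :=
          Finset.one_lt_card.mpr ⟨b, hb, j, hj, hne'⟩
        omega
      have hjJsome : j ∈ Jsome := (Finset.mem_inter.mp hj).2
      have hjn : j ∉ Jnone := ((hmemJsome j).mp hjJsome).1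
      have : ∃ J ∈ 𝒥, j ∈ J := by
        by_contra hnoJ
        exact hjn ((hmemJnone j).mpr hnoJ)
      obtain ⟨J₀, hJ₀, hjJ₀⟩ := this
      refine ⟨J₀, hJ₀, fun k hk => ?_⟩
      by_cases hks : k ∈ Jsome
      · have : k ∈ suppSet x ∩ Jsome := Finset.mem_inter.mpr ⟨hk, hks⟩
        rw [hsing] at this
        simp at this
        subst this; exact hjJ₀
      · exact hkey k hk hks J₀ hJ₀
  obtain ⟨J₀, hJ₀, hsub⟩ := hJ0
  have := h𝒥 J₀ hJ₀ x (fun j hj => by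
    by_contra hxj
    exact hj (hsub j (by simp [suppSet, hxj])))
  linarith
end SparseApprox
end

section
/- Let H be an n×m real matrix, y ∈ ℝⁿ and α ≥ 0, and let 𝒥 be a nonempty family of forbidden supports for the ℓ∞ problem. Define J^none := {1,…,m} \ ⋃_{J ∈ 𝒥} J and J^some := {1,…,m} \ (J^none ∪ ⋂_{J ∈ 𝒥} J). Then every x ∈ ℝᵐ with ‖y − Hx‖∞ ≤ α satisfies 2·#( supp(x) ∩ J^none ) + #( supp(x) ∩ J^some ) ≥ 2, where supp(x) = {j : x_j ≠ 0}. -/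
open scoped Classical
open Finset

noncomputable section SparseApprox

/-!
If `2 * #(supp x ∩ Jnone) + #(supp x ∩ Jsome) < 2`, then `supp x` misses `Jnone` and meets `Jsome`
in at most one index `j₀`. Every other index of `supp x` lies in all members of `𝒥`, so a member
containing `j₀` (any member, if there is no `j₀`) contains all of `supp x`; as that member is a
forbidden support, the misfit of `x` exceeds `α`.
-/

theorem suppSet_subset_iff {m : ℕ} {x : Fin m → ℝ} {J : Finset (Fin m)} :
    suppSet x ⊆ J ↔ ∀ j ∉ J, x j = 0 := by
  simp only [suppSet, subset_iff, mem_filter, mem_univ, true_and, ne_eq]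
  exact forall_congr' fun j => not_imp_comm

theorem ForbiddenLinf.not_suppSet_subset {n m : ℕ} {H : Matrix (Fin n) (Fin m) ℝ}
    {y : Fin n → ℝ} {α : ℝ} {J : Finset (Fin m)} (hJ : ForbiddenLinf H y α J)
    {x : Fin m → ℝ} (hx : linfMisfit H y x ≤ α) : ¬ suppSet x ⊆ J := fun hsub =>
  (hJ x (suppSet_subset_iff.mp hsub)).not_ge hx

section FamilyOfFinsets

variable {ι : Type*} [DecidableEq ι] {𝒥 : Finset (Finset ι)}

theorem filter_exists_mem_eq_sup [Fintype ι] :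
    (univ.filter fun j => ∃ J ∈ 𝒥, j ∈ J) = 𝒥.sup id := by
  ext j
  simp [mem_sup]

theorem filter_forall_mem_eq_inf [Fintype ι] :
    (univ.filter fun j => ∀ J ∈ 𝒥, j ∈ J) = 𝒥.inf id := by
  ext j
  simp [mem_inf]

theorem exists_mem_superset_of_card_le_one (h𝒥 : 𝒥.Nonempty) {T : Finset ι}
    (hT : T ⊆ 𝒥.sup id) (hcard : #T ≤ 1) : ∃ J ∈ 𝒥, T ⊆ J := by
  obtain rfl | ⟨a, ha⟩ := T.eq_empty_or_nonempty
  · obtain ⟨J, hJ⟩ := h𝒥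
    exact ⟨J, hJ, empty_subset J⟩
  · obtain ⟨J, hJ, haJ⟩ := mem_sup.mp (hT ha)
    exact ⟨J, hJ, fun b hb => card_le_one.mp hcard b hb a ha ▸ haJ⟩

theorem exists_mem_superset_of_card_sdiff_inf_le_one [Fintype ι] (h𝒥 : 𝒥.Nonempty)
    {S : Finset ι} (hS : S ⊆ 𝒥.sup id) (hcard : #(S \ 𝒥.inf id) ≤ 1) :
    ∃ J ∈ 𝒥, S ⊆ J := by
  obtain ⟨J, hJ, hsub⟩ :=
    exists_mem_superset_of_card_le_one h𝒥 (sdiff_subset.trans hS) hcard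
  exact ⟨J, hJ, le_sdiff_sup.trans (sup_le hsub (inf_le hJ))⟩

theorem exists_mem_superset_of_two_mul_card_add_card_lt_two [Fintype ι] (h𝒥 : 𝒥.Nonempty)
    {S : Finset ι}
    (h : 2 * #(S ∩ (𝒥.sup id)ᶜ) + #(S ∩ ((𝒥.sup id)ᶜ ∪ 𝒥.inf id)ᶜ) < 2) :
    ∃ J ∈ 𝒥, S ⊆ J := by
  have hS : S ⊆ 𝒥.sup id := by
    rw [← sdiff_eq_empty_iff_subset, sdiff_eq_inter_compl, ← card_eq_zero]
    omega
  refine exists_mem_superset_of_card_sdiff_inf_le_one h𝒥 hS ?_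
  have hsome : S ∩ ((𝒥.sup id)ᶜ ∪ 𝒥.inf id)ᶜ = S \ 𝒥.inf id := by
    rw [compl_union, compl_compl, ← inter_assoc, inter_eq_left.mpr hS, sdiff_eq_inter_compl]
  rw [hsome] at h
  omega

end FamilyOfFinsets

theorem forbidden_support_family_inequality_linf_general {n m : ℕ}
    (H : Matrix (Fin n) (Fin m) ℝ) (y : Fin n → ℝ) (α : ℝ)
    (𝒥 : Finset (Finset (Fin m))) (h𝒥ne : 𝒥.Nonempty)
    (h𝒥 : ∀ J ∈ 𝒥, ForbiddenLinf H y α J)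
    (Jnone Jsome : Finset (Fin m))
    (hnone : Jnone = (Finset.univ.filter fun j => ∃ J ∈ 𝒥, j ∈ J)ᶜ)
    (hsome : Jsome = (Jnone ∪ Finset.univ.filter fun j => ∀ J ∈ 𝒥, j ∈ J)ᶜ)
    (x : Fin m → ℝ) (hx : linfMisfit H y x ≤ α) :
    2 ≤ 2 * (suppSet x ∩ Jnone).card + (suppSet x ∩ Jsome).card := by
  subst hnone hsome
  rw [filter_exists_mem_eq_sup, filter_forall_mem_eq_inf]
  by_contra! hlt
  obtain ⟨J, hJ, hsub⟩ := exists_mem_superset_of_two_mul_card_add_card_lt_two h𝒥ne hlt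
  exact (h𝒥 J hJ).not_suppSet_subset hx hsub

/-- the forbidden support family inequality for the ℓ∞ problem. -/
theorem forbidden_support_family_inequality_linf {n m : ℕ}
    (H : Matrix (Fin n) (Fin m) ℝ) (y : Fin n → ℝ) (α : ℝ) (hα : 0 ≤ α)
    (𝒥 : Finset (Finset (Fin m))) (h𝒥ne : 𝒥.Nonempty)
    (h𝒥 : ∀ J ∈ 𝒥, ForbiddenLinf H y α J)
    (Jnone Jsome : Finset (Fin m))
    (hnone : Jnone = (Finset.univ.filter fun j => ∃ J ∈ 𝒥, j ∈ J)ᶜ)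
    (hsome : Jsome = (Jnone ∪ Finset.univ.filter fun j => ∀ J ∈ 𝒥, j ∈ J)ᶜ)
    (x : Fin m → ℝ) (hx : linfMisfit H y x ≤ α) :
    2 ≤ 2 * (suppSet x ∩ Jnone).card + (suppSet x ∩ Jsome).card :=
  forbidden_support_family_inequality_linf_general H y α 𝒥 h𝒥ne h𝒥 Jnone Jsome hnone hsome x hx
end SparseApprox
end

section
/- Let E be a finite set, let 𝒥 be a nonempty family of subsets of E, and let S ⊆ E be a set such that S \ J ≠ ∅ for every J ∈ 𝒥. Define J^none := E \ ⋃_{J ∈ 𝒥} J and J^some := E \ (J^none ∪ ⋂_{J ∈ 𝒥} J). Then 2·|S ∩ J^none| + |S ∩ J^some| ≥ 2. -/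
open scoped Classical
open Finset

noncomputable section SparseApprox

section SetCovering

variable {E : Type*} (𝒥 : Finset (Finset E))

def HitBySomeNotAll (e : E) : Prop :=
  (∃ J ∈ 𝒥, e ∈ J) ∧ ∃ J ∈ 𝒥, e ∉ J

variable [DecidableEq E]

theorem exists_hitByNone_or_two_hitBySomeNotAll {S : Finset E} (h𝒥 : 𝒥.Nonempty)
    (hS : ∀ J ∈ 𝒥, (S \ J).Nonempty) :
    (∃ e ∈ S, ∀ J ∈ 𝒥, e ∉ J) ∨
      ∃ e ∈ S, ∃ f ∈ S, e ≠ f ∧ HitBySomeNotAll 𝒥 e ∧ HitBySomeNotAll 𝒥 f := by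
  obtain ⟨J₀, hJ₀⟩ := h𝒥
  obtain ⟨e, heSJ₀⟩ := hS J₀ hJ₀
  obtain ⟨heS, heJ₀⟩ := mem_sdiff.1 heSJ₀
  by_cases he : ∀ J ∈ 𝒥, e ∉ J
  · exact .inl ⟨e, heS, he⟩
  push Not at he
  obtain ⟨J₁, hJ₁, heJ₁⟩ := he
  -- `J₁` contains `e` but misses some `f ∈ S`, so `f ≠ e`.
  obtain ⟨f, hfSJ₁⟩ := hS J₁ hJ₁
  obtain ⟨hfS, hfJ₁⟩ := mem_sdiff.1 hfSJ₁
  by_cases hf : ∀ J ∈ 𝒥, f ∉ J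
  · exact .inl ⟨f, hfS, hf⟩
  push Not at hf
  exact .inr ⟨e, heS, f, hfS, ne_of_mem_of_not_mem heJ₁ hfJ₁,
    ⟨⟨J₁, hJ₁, heJ₁⟩, J₀, hJ₀, heJ₀⟩, hf, J₁, hJ₁, hfJ₁⟩

variable [Fintype E] {𝒥}

theorem mem_compl_filter_exists_mem_iff {e : E} :
    e ∈ (univ.filter fun x => ∃ J ∈ 𝒥, x ∈ J)ᶜ ↔ ∀ J ∈ 𝒥, e ∉ J := by
  simp

theorem mem_compl_union_filter_forall_mem_iff {e : E} :
    e ∈ ((univ.filter fun x => ∃ J ∈ 𝒥, x ∈ J)ᶜ ∪ univ.filter fun x => ∀ J ∈ 𝒥, x ∈ J)ᶜ ↔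
      HitBySomeNotAll 𝒥 e := by
  simp [HitBySomeNotAll]

end SetCovering

/-- the purely combinatorial set covering fact behind the
forbidden support family inequalities. -/
theorem set_covering_family_inequality {E : Type*} [Fintype E] [DecidableEq E]
    (𝒥 : Finset (Finset E)) (h𝒥ne : 𝒥.Nonempty)
    (S : Finset E) (hS : ∀ J ∈ 𝒥, (S \ J).Nonempty)
    (Jnone Jsome : Finset E)
    (hnone : Jnone = (Finset.univ.filter fun e => ∃ J ∈ 𝒥, e ∈ J)ᶜ)
    (hsome : Jsome = (Jnone ∪ Finset.univ.filter fun e => ∀ J ∈ 𝒥, e ∈ J)ᶜ) :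
    2 ≤ 2 * (S ∩ Jnone).card + (S ∩ Jsome).card := by
  subst hnone hsome
  rcases exists_hitByNone_or_two_hitBySomeNotAll 𝒥 h𝒥ne hS with
    ⟨e, heS, he⟩ | ⟨e, heS, f, hfS, hef, he, hf⟩
  · have : 0 < (S ∩ _).card :=
      card_pos.2 ⟨e, mem_inter.2 ⟨heS, mem_compl_filter_exists_mem_iff.2 he⟩⟩
    omega
  · have : 1 < (S ∩ _).card := one_lt_card.2
      ⟨e, mem_inter.2 ⟨heS, mem_compl_union_filter_forall_mem_iff.2 he⟩,
        f, mem_inter.2 ⟨hfS, mem_compl_union_filter_forall_mem_iff.2 hf⟩, hef⟩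
    omega
end SparseApprox
end

section
/- Let H be an n×m real matrix, y ∈ ℝⁿ, α ≥ 0, and suppose there exists x ∈ ℝᵐ with ‖y − Hx‖₁ ≤ α. Then for every natural number k, there exists x ∈ ℝᵐ with ‖y − Hx‖₁ ≤ α and ‖x‖₀ ≤ k if and only if there exists a set S ⊆ {1,…,m} with |S| ≤ k that is not a forbidden support. Consequently, the optimal value of the sparse approximation problem P₀/₁ equals the minimum cardinality of a non-forbidden support, i.e., the optimal value of the set covering formulation IP^cov₀/₁. -/
open scoped Classical
open Finset

noncomputable section SparseApprox

/-- equivalence of the sparse approximation problem P₀/₁ and the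
set covering formulation IP^cov₀/₁; in particular the optimal values agree. -/
theorem sparse_eq_set_cover_l1 {n m : ℕ}
    (H : Matrix (Fin n) (Fin m) ℝ) (y : Fin n → ℝ) (α : ℝ) (hα : 0 ≤ α)
    (hfeas : ∃ x : Fin m → ℝ, l1Misfit H y x ≤ α) :
    (∀ k : ℕ,
      (∃ x : Fin m → ℝ, l1Misfit H y x ≤ α ∧ (suppSet x).card ≤ k) ↔
        ∃ S : Finset (Fin m), S.card ≤ k ∧ ¬ ForbiddenL1 H y α S) ∧
    sInf {k : ℕ | ∃ x : Fin m → ℝ, l1Misfit H y x ≤ α ∧ (suppSet x).card = k} =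
      sInf {k : ℕ | ∃ S : Finset (Fin m), ¬ ForbiddenL1 H y α S ∧ S.card = k} := by

  have key : ∀ S : Finset (Fin m), ¬ ForbiddenL1 H y α S ↔
      ∃ x : Fin m → ℝ, l1Misfit H y x ≤ α ∧ suppSet x ⊆ S := by
    intro S
    constructor
    · intro h
      simp only [ForbiddenL1, not_forall, not_lt] at h
      obtain ⟨x, hx, hle⟩ := h
      refine ⟨x, hle, fun j hj => ?_⟩
      simp only [suppSet, Finset.mem_filter] at hj
      by_contra hnot
      exact hj.2 (hx j hnot)
    · rintro ⟨x, hle, hsub⟩ hforb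
      have := hforb x (fun j hj => by
        by_contra hne
        exact hj (hsub (by simp [suppSet, hne])))
      linarith
  have main : ∀ k : ℕ,
      (∃ x : Fin m → ℝ, l1Misfit H y x ≤ α ∧ (suppSet x).card ≤ k) ↔
        ∃ S : Finset (Fin m), S.card ≤ k ∧ ¬ ForbiddenL1 H y α S := by
    intro k
    constructor
    · rintro ⟨x, hle, hcard⟩
      exact ⟨suppSet x, hcard, (key _).mpr ⟨x, hle, Finset.Subset.refl _⟩⟩
    · rintro ⟨S, hcard, hnf⟩
      obtain ⟨x, hle, hsub⟩ := (key S).mp hnf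
      exact ⟨x, hle, le_trans (Finset.card_le_card hsub) hcard⟩
  refine ⟨main, ?_⟩
  obtain ⟨x0, hx0⟩ := hfeas
  have hA : (suppSet x0).card ∈ {k : ℕ | ∃ x : Fin m → ℝ, l1Misfit H y x ≤ α ∧ (suppSet x).card = k} :=
    ⟨x0, hx0, rfl⟩
  apply le_antisymm
  · have hB : (suppSet x0).card ∈ {k : ℕ | ∃ S : Finset (Fin m), ¬ ForbiddenL1 H y α S ∧ S.card = k} :=
      ⟨suppSet x0, (key _).mpr ⟨x0, hx0, Finset.Subset.refl _⟩, rfl⟩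
    refine le_csInf ⟨(suppSet x0).card, hB⟩ ?_
    rintro k ⟨S, hnf, rfl⟩
    obtain ⟨x, hle, hsub⟩ := (key S).mp hnf
    exact le_trans (Nat.sInf_le ⟨x, hle, rfl⟩) (Finset.card_le_card hsub)
  · refine le_csInf ⟨(suppSet x0).card, hA⟩ ?_
    rintro k ⟨x, hle, rfl⟩
    exact Nat.sInf_le ⟨suppSet x, (key _).mpr ⟨x, hle, Finset.Subset.refl _⟩, rfl⟩
end SparseApprox
end
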